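/- Let G = (Q ⋊ C_p) × (C_r ⋊ C_t) where p, q, r, t are distinct primes, q | p−1, t | r−1, Q is an elementary abelian q-group that is a faithful simple module for C_p, and C_r ⋊ C_t is nonabelian of order rt. Let A = C_t (the chosen complement), B a subgroup of order q in Q, H = A × B, and T a subgroup of order t with T ≠ A. Then HT ≠ TH; in particular H does not permute with T. -/

import Mathlib

/-!
The order `t` is coprime to `q` and `p`, so no nontrivial element of `Q ⋊ C_p` has order
dividing `t`; hence `T` lies in the factor `C_r ⋊ C_t`. The projection onto that factor kills
`B` and maps `A` isomorphically, so `HT = TH` would give `AT = TA` there. But then `AT` is a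
subgroup of order `t²` (distinct subgroups of prime order meet trivially) in a group of order
`rt`, although `t ≠ r`.
-/

open scoped Pointwise

theorem eq_one_of_pow_eq_one_of_coprime {G : Type*} [Monoid G] {x : G} {m n : ℕ}
    (hmn : m.Coprime n) (hm : x ^ m = 1) (hn : x ^ n = 1) : x = 1 :=
  orderOf_eq_one_iff.mp <| Nat.eq_one_of_dvd_coprimes hmn
    (orderOf_dvd_of_pow_eq_one hm) (orderOf_dvd_of_pow_eq_one hn)

namespace SemidirectProduct

variable {N K : Type*} [Group N] [Group K] {φ : K →* MulAut N}

theorem eq_one_of_pow_eq_one {n : ℕ} (hN : ∀ x : N, x ^ n = 1 → x = 1)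
    (hK : ∀ k : K, k ^ n = 1 → k = 1) {g : N ⋊[φ] K} (hg : g ^ n = 1) : g = 1 := by
  have hright : g.right = 1 := by
    have := congrArg rightHom hg
    rw [map_pow, map_one] at this
    exact hK _ this
  have hg' : g = inl g.left := by rw [← inl_left_mul_inr_right g, hright]; simp
  rw [hg', ← map_pow] at hg
  rw [hg', hN _ (inl_injective (hg.trans (map_one _).symm)), map_one]

end SemidirectProduct

namespace Subgroup

section Permuting

variable {G G' : Type*} [Group G] [Group G'] {H K : Subgroup G}

theorem coe_sup_of_mul_comm (h : (H : Set G) * K = K * H) :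
    ((H ⊔ K : Subgroup G) : Set G) = H * K := by
  let L : Subgroup G :=
    { carrier := H * K
      one_mem' := ⟨1, H.one_mem, 1, K.one_mem, mul_one 1⟩
      mul_mem' := by
        rintro _ _ ⟨a, ha, b, hb, rfl⟩ ⟨c, hc, d, hd, rfl⟩
        obtain ⟨c', hc', b', hb', hcb⟩ : b * c ∈ (H : Set G) * K := h ▸ Set.mul_mem_mul hb hc
        refine ⟨a * c', H.mul_mem ha hc', b' * d, K.mul_mem hb' hd, ?_⟩
        simp only [mul_assoc, ← mul_assoc c', hcb]
      inv_mem' := by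
        rintro _ ⟨a, ha, b, hb, rfl⟩
        simpa only [mul_inv_rev] using h ▸ Set.mul_mem_mul (K.inv_mem hb) (H.inv_mem ha) }
  refine subset_antisymm (sup_le (fun a ha => ?_) (fun b hb => ?_) : H ⊔ K ≤ L) ?_
  · exact ⟨a, ha, 1, K.one_mem, mul_one a⟩
  · exact ⟨1, H.one_mem, b, hb, one_mul b⟩
  · rintro _ ⟨a, ha, b, hb, rfl⟩
    exact mul_mem (mem_sup_left ha) (mem_sup_right hb)

theorem natCard_mul_of_disjoint (h : Disjoint H K) :
    Nat.card ((H : Set G) * (K : Set G) : Set G) = Nat.card H * Nat.card K := by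
  have hrange : Set.range (fun g : H × K => (g.1 : G) * g.2) = (H : Set G) * K := by
    ext x
    simp [Set.mem_mul, eq_comm]
  rw [← hrange, Nat.card_range_of_injective (mul_injective_of_disjoint h), Nat.card_prod]

theorem card_mul_card_dvd_of_mul_comm (hd : Disjoint H K) (h : (H : Set G) * K = K * H) :
    Nat.card H * Nat.card K ∣ Nat.card G := by
  rw [← natCard_mul_of_disjoint hd, ← coe_sup_of_mul_comm h]
  exact card_subgroup_dvd_card (H ⊔ K)

theorem disjoint_of_card_eq_prime {p : ℕ} (hp : p.Prime) (hH : Nat.card H = p)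
    (hK : Nat.card K = p) (hne : H ≠ K) : Disjoint H K := by
  have : Finite H := Nat.finite_of_card_ne_zero (hH ▸ hp.ne_zero)
  have : Finite K := Nat.finite_of_card_ne_zero (hK ▸ hp.ne_zero)
  rw [disjoint_iff, ← card_eq_one]
  rcases hp.eq_one_or_self_of_dvd _ (hH ▸ card_dvd_of_le inf_le_left) with h | h
  · exact h
  · have hinfH := eq_of_le_of_card_ge inf_le_left (hH ▸ h.ge)
    have hinfK := eq_of_le_of_card_ge inf_le_right (hK ▸ h.ge)
    exact absurd (hinfH.symm.trans hinfK) hne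

theorem coe_map_mul_comm (f : G →* G') (h : (H : Set G) * K = K * H) :
    (H.map f : Set G') * K.map f = K.map f * H.map f := by
  simpa only [coe_map, Set.image_mul] using congrArg (f '' ·) h

end Permuting

section Prod

variable {G₁ G₂ : Type*} [Group G₁] [Group G₂]

theorem map_inr_map_snd_eq_self {T : Subgroup (G₁ × G₂)}
    (hT : ∀ g : G₁, g ^ Nat.card T = 1 → g = 1) :
    (T.map (MonoidHom.snd G₁ G₂)).map (MonoidHom.inr G₁ G₂) = T := by
  have hfst : ∀ x ∈ T, x.1 = 1 := fun x hx => by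
    have := congrArg (fun y : T => (y : G₁ × G₂).1) (pow_card_eq_one' (x := (⟨x, hx⟩ : T)))
    simp only [coe_pow, Prod.pow_fst, coe_one, Prod.fst_one] at this
    exact hT _ this
  ext x
  simp only [map_map, mem_map, MonoidHom.coe_comp, Function.comp_apply,
    MonoidHom.coe_snd, MonoidHom.inr_apply]
  constructor
  · rintro ⟨y, hy, rfl⟩
    rwa [show ((1, y.2) : G₁ × G₂) = y from Prod.ext (hfst y hy).symm rfl]
  · exact fun hx => ⟨x, hx, Prod.ext (hfst x hx).symm rfl⟩

end Prod

end Subgroup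

theorem stmt_14_general (p q r t : ℕ) (hp : p.Prime) (hq : q.Prime) (hr : r.Prime)
    (ht : t.Prime) (hdistinct : p ≠ q ∧ p ≠ r ∧ p ≠ t ∧ q ≠ r ∧ q ≠ t ∧ r ≠ t)
    (Qg Cp Cr Ct : Type*) [Group Qg] [Group Cp] [Group Cr] [Group Ct]
    (hQel : (∀ x : Qg, x ^ q = 1) ∧ (∀ x y : Qg, x * y = y * x))
    (hCp : Nat.card Cp = p) (hCr : Nat.card Cr = r) (hCt : Nat.card Ct = t)
    (φ : Cp →* MulAut Qg)
    (ψ : Ct →* MulAut Cr)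
    (A B H T : Subgroup ((Qg ⋊[φ] Cp) × (Cr ⋊[ψ] Ct)))
    (hA : A = ((MonoidHom.inr (Qg ⋊[φ] Cp) (Cr ⋊[ψ] Ct)).comp
      SemidirectProduct.inr).range)
    (hB : B ≤ ((MonoidHom.inl (Qg ⋊[φ] Cp) (Cr ⋊[ψ] Ct)).comp
      SemidirectProduct.inl).range)
    (hH : H = A ⊔ B)
    (hTcard : Nat.card T = t) (hTA : T ≠ A) :
    (H : Set ((Qg ⋊[φ] Cp) × (Cr ⋊[ψ] Ct))) * (T : Set ((Qg ⋊[φ] Cp) × (Cr ⋊[ψ] Ct))) ≠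
      (T : Set ((Qg ⋊[φ] Cp) × (Cr ⋊[ψ] Ct))) * (H : Set ((Qg ⋊[φ] Cp) × (Cr ⋊[ψ] Ct))) := by
  obtain ⟨-, -, hpt, -, hqt, hrt⟩ := hdistinct
  set snd := MonoidHom.snd (Qg ⋊[φ] Cp) (Cr ⋊[ψ] Ct)
  set inr := MonoidHom.inr (Qg ⋊[φ] Cp) (Cr ⋊[ψ] Ct)
  set A' := (SemidirectProduct.inr : Ct →* Cr ⋊[ψ] Ct).range
  have hTinr : (T.map snd).map inr = T := Subgroup.map_inr_map_snd_eq_self fun g hg =>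
    SemidirectProduct.eq_one_of_pow_eq_one
      (fun x hx => eq_one_of_pow_eq_one_of_coprime ((Nat.coprime_primes hq ht).mpr hqt)
        (hQel.1 x) hx)
      (fun c hc => eq_one_of_pow_eq_one_of_coprime ((Nat.coprime_primes hp ht).mpr hpt)
        (hCp ▸ pow_card_eq_one') hc)
      (hTcard ▸ hg)
  have hAinr : A'.map inr = A := by rw [hA, MonoidHom.range_comp]
  have hHsnd : H.map snd = A' := by
    have hBsnd : B.map snd = ⊥ := le_bot_iff.mp <| (Subgroup.map_mono hB).trans <| by
      rw [← MonoidHom.range_comp, ← MonoidHom.comp_assoc, MonoidHom.snd_comp_inl,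
        MonoidHom.one_comp, MonoidHom.range_one]
    rw [hH, Subgroup.map_sup, hBsnd, sup_bot_eq, ← hAinr, Subgroup.map_map,
      MonoidHom.snd_comp_inr, Subgroup.map_id]
  have hcardT' : Nat.card (T.map snd) = t := by
    rw [← Subgroup.card_map_of_injective (f := inr) (Prod.mk_right_injective 1), hTinr, hTcard]
  have hcardA' : Nat.card A' = t :=
    hCt ▸ Nat.card_congr (MonoidHom.ofInjective SemidirectProduct.inr_injective).toEquiv.symm
  have hne : A' ≠ T.map snd := fun h => hTA (by rw [← hTinr, ← h, hAinr])
  intro hcomm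
  have hdvd := Subgroup.card_mul_card_dvd_of_mul_comm
    (Subgroup.disjoint_of_card_eq_prime ht hcardA' hcardT' hne)
    (hHsnd ▸ Subgroup.coe_map_mul_comm snd hcomm)
  rw [hcardA', hcardT', SemidirectProduct.card, hCr, hCt,
    Nat.mul_dvd_mul_iff_right ht.pos] at hdvd
  exact hrt ((Nat.prime_dvd_prime_iff_eq ht hr).mp hdvd).symm

/-- in `G = (Q ⋊ C_p) × (C_r ⋊ C_t)`, with `A` the chosen complement of
order `t`, `B ≤ Q` of order `q`, `H = A × B = A ⊔ B`, and `T` a subgroup of order `t`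
with `T ≠ A`, the subgroups `H` and `T` do not permute. -/
theorem stmt_14 (p q r t : ℕ) (hp : p.Prime) (hq : q.Prime) (hr : r.Prime)
    (ht : t.Prime) (hdistinct : p ≠ q ∧ p ≠ r ∧ p ≠ t ∧ q ≠ r ∧ q ≠ t ∧ r ≠ t)
    (hqp : q ∣ p - 1) (htr : t ∣ r - 1)
    (Qg Cp Cr Ct : Type*) [Group Qg] [Group Cp] [Group Cr] [Group Ct]
    [Finite Qg] [Finite Cp] [Finite Cr] [Finite Ct]
    (hQel : (∀ x : Qg, x ^ q = 1) ∧ (∀ x y : Qg, x * y = y * x))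
    (hQnt : Nat.card Qg ≠ 1)
    (hCp : Nat.card Cp = p) (hCr : Nat.card Cr = r) (hCt : Nat.card Ct = t)
    (φ : Cp →* MulAut Qg) (hfaith : Function.Injective φ)
    (hsimple : ∀ S : Subgroup Qg, (∀ (c : Cp), ∀ x ∈ S, φ c x ∈ S) → S = ⊥ ∨ S = ⊤)
    (ψ : Ct →* MulAut Cr)
    (hnonab : ¬ ∀ x y : Cr ⋊[ψ] Ct, x * y = y * x)
    (A B H T : Subgroup ((Qg ⋊[φ] Cp) × (Cr ⋊[ψ] Ct)))
    (hA : A = ((MonoidHom.inr (Qg ⋊[φ] Cp) (Cr ⋊[ψ] Ct)).comp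
      SemidirectProduct.inr).range)
    (hB : B ≤ ((MonoidHom.inl (Qg ⋊[φ] Cp) (Cr ⋊[ψ] Ct)).comp
      SemidirectProduct.inl).range)
    (hBcard : Nat.card B = q)
    (hH : H = A ⊔ B)
    (hTcard : Nat.card T = t) (hTA : T ≠ A) :
    (H : Set ((Qg ⋊[φ] Cp) × (Cr ⋊[ψ] Ct))) * (T : Set ((Qg ⋊[φ] Cp) × (Cr ⋊[ψ] Ct))) ≠
      (T : Set ((Qg ⋊[φ] Cp) × (Cr ⋊[ψ] Ct))) * (H : Set ((Qg ⋊[φ] Cp) × (Cr ⋊[ψ] Ct))) :=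
  stmt_14_general p q r t hp hq hr ht hdistinct Qg Cp Cr Ct hQel hCp hCr hCt φ ψ A B H T hA hB hH
    hTcard hTA
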